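/- arXiv:2401.09390 — 2 statements merged into one kernel-verified Lean document; each statement's English description precedes it below -/
import Mathlib

section
/- For q ∈ (0,1), an integer α ≥ 2, and nonnegative integer k, the function g(k) := [k+1]_q - (q^k [k+1]_q)^{1/α} is strictly increasing in k; more precisely, g(k+1) - g(k) ≥ q^{k+1}(1 - q^{k/α}/H) > 0, where H := Σ_{i=0}^{α-1} ([k+2]_q^{α-1-i} [k+1]_q^{i})^{1/α}. -/
noncomputable def qint (q : ℝ) (n : ℕ) : ℝ := ∑ i ∈ Finset.range n, q ^ i

/-!
With `a = [k+2]_q`, `b = [k+1]_q` and `H` as in the statement, `a - b = q^(k+1)` and the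
factorisation `a - b = (a^(1/α) - b^(1/α)) H` give `a^(1/α) - b^(1/α) = q^(k+1) / H`. Bounding
`(q^(k+1) a)^(1/α)` above by `q^(k/α) a^(1/α)` turns the increment of `g` into at least
`q^(k+1) - q^(k/α) q^(k+1) / H`; it is positive because `q^(k/α) ≤ 1 < α ≤ H`, every summand of `H`
being at least `1`.
-/

open Finset

lemma one_le_qint_succ {q : ℝ} (hq : 0 ≤ q) (n : ℕ) : 1 ≤ qint q (n + 1) := by
  rw [qint, sum_range_succ']
  simpa using sum_nonneg fun i _ => pow_nonneg hq (i + 1)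

lemma qint_succ_sub_qint (q : ℝ) (n : ℕ) : qint q (n + 1) - qint q n = q ^ n := by
  rw [qint, qint, sum_range_succ, add_sub_cancel_left]

namespace Real

lemma pow_mul_pow_rpow {a b : ℝ} (ha : 0 ≤ a) (hb : 0 ≤ b) (m j : ℕ) (x : ℝ) :
    (a ^ m * b ^ j) ^ x = (a ^ x) ^ m * (b ^ x) ^ j := by
  rw [mul_rpow (by positivity) (by positivity), rpow_pow_comm ha, rpow_pow_comm hb]

lemma sub_eq_rpow_one_div_sub_mul_sum {a b : ℝ} (ha : 0 ≤ a) (hb : 0 ≤ b) {n : ℕ} (hn : n ≠ 0) :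
    a - b = (a ^ ((1 : ℝ) / n) - b ^ ((1 : ℝ) / n)) *
      ∑ i ∈ range n, (a ^ (n - 1 - i) * b ^ i) ^ ((1 : ℝ) / n) := by
  have hroot : ∀ c : ℝ, 0 ≤ c → (c ^ ((1 : ℝ) / n)) ^ n = c := fun c hc => by
    rw [one_div, rpow_inv_natCast_pow hc hn]
  simp_rw [pow_mul_pow_rpow ha hb, mul_comm ((a ^ ((1 : ℝ) / n)) ^ _), mul_comm (_ - _)]
  have h := geom_sum₂_mul (b ^ ((1 : ℝ) / n)) (a ^ ((1 : ℝ) / n)) n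
  rw [hroot a ha, hroot b hb] at h
  linear_combination h

lemma natCast_le_sum_rpow_one_div {a b : ℝ} (ha : 1 ≤ a) (hb : 1 ≤ b) (n : ℕ) :
    (n : ℝ) ≤ ∑ i ∈ range n, (a ^ (n - 1 - i) * b ^ i) ^ ((1 : ℝ) / n) := by
  simpa using card_nsmul_le_sum (range n) _ 1 fun i _ =>
    one_le_rpow (one_le_mul_of_one_le_of_one_le (one_le_pow₀ ha) (one_le_pow₀ hb)) (by positivity)

lemma pow_mul_rpow_one_div {q c : ℝ} (hq : 0 ≤ q) (hc : 0 ≤ c) (k n : ℕ) :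
    (q ^ k * c) ^ ((1 : ℝ) / n) = q ^ ((k : ℝ) / n) * c ^ ((1 : ℝ) / n) := by
  rw [mul_rpow (by positivity) hc, ← rpow_natCast, ← rpow_mul hq, mul_one_div]

end Real

theorem stmt_6 (q : ℝ) (hq0 : 0 < q) (hq1 : q < 1) (α : ℕ) (hα : 2 ≤ α) (k : ℕ) :
    (qint q (k + 2) - (q ^ (k + 1) * qint q (k + 2)) ^ ((1 : ℝ) / α)) -
        (qint q (k + 1) - (q ^ k * qint q (k + 1)) ^ ((1 : ℝ) / α)) ≥
      q ^ (k + 1) * (1 - q ^ ((k : ℝ) / α) /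
        (∑ i ∈ Finset.range α,
          (qint q (k + 2) ^ (α - 1 - i) * qint q (k + 1) ^ i) ^ ((1 : ℝ) / α))) ∧
    q ^ (k + 1) * (1 - q ^ ((k : ℝ) / α) /
        (∑ i ∈ Finset.range α,
          (qint q (k + 2) ^ (α - 1 - i) * qint q (k + 1) ^ i) ^ ((1 : ℝ) / α))) > 0 := by
  set a := qint q (k + 2)
  set b := qint q (k + 1)
  set H := ∑ i ∈ range α, (a ^ (α - 1 - i) * b ^ i) ^ ((1 : ℝ) / α)
  have ha : 1 ≤ a := one_le_qint_succ hq0.le (k + 1)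
  have hb : 1 ≤ b := one_le_qint_succ hq0.le k
  have hab : a - b = q ^ (k + 1) := qint_succ_sub_qint q (k + 1)
  have hH : (1 : ℝ) < H :=
    (by exact_mod_cast hα : (1 : ℝ) < α).trans_le (Real.natCast_le_sum_rpow_one_div ha hb α)
  have hroot : a ^ ((1 : ℝ) / α) - b ^ ((1 : ℝ) / α) = q ^ (k + 1) / H := by
    rw [eq_div_iff (by positivity), ← hab]
    exact (Real.sub_eq_rpow_one_div_sub_mul_sum (by positivity) (by positivity) (by omega)).symm
  have hshrink : (q ^ (k + 1) * a) ^ ((1 : ℝ) / α) ≤ q ^ ((k : ℝ) / α) * a ^ ((1 : ℝ) / α) := by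
    rw [← Real.pow_mul_rpow_one_div hq0.le (by positivity)]
    gcongr (?_ * _) ^ _
    exact pow_le_pow_of_le_one hq0.le hq1.le k.le_succ
  have hfrac : q ^ ((k : ℝ) / α) / H < 1 :=
    (div_lt_one (by positivity)).2 ((Real.rpow_le_one hq0.le hq1.le (by positivity)).trans_lt hH)
  refine ⟨?_, mul_pos (by positivity) (by linarith)⟩
  rw [Real.pow_mul_rpow_one_div hq0.le (by positivity : 0 ≤ b) k α, ge_iff_le]
  calc q ^ (k + 1) * (1 - q ^ ((k : ℝ) / α) / H)
      = (a - b) - q ^ ((k : ℝ) / α) * (a ^ ((1 : ℝ) / α) - b ^ ((1 : ℝ) / α)) := by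
        rw [hroot, hab]; ring
    _ ≤ _ := by linarith
end

section
/- Let q ∈ (0,1), n a positive integer, and j ∈ {0,1,...,n-1}. Then [j+1]_q/[n]_q - [j]_q/[n+1]_q = ([j+1]_q[n+1]_q - [j]_q[n]_q)/([n]_q[n+1]_q) ≤ 3/[n+1]_q. -/
section

variable {q : ℝ}

lemma qint_succ (q : ℝ) (n : ℕ) : qint q (n + 1) = qint q n + q ^ n :=
  Finset.sum_range_succ _ _

lemma qint_nonneg (hq : 0 ≤ q) (n : ℕ) : 0 ≤ qint q n :=
  Finset.sum_nonneg fun i _ => pow_nonneg hq i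

lemma qint_mono (hq : 0 ≤ q) : Monotone (qint q) := fun _ _ h =>
  Finset.sum_le_sum_of_subset_of_nonneg (Finset.range_subset_range.mpr h)
    fun i _ _ => pow_nonneg hq i

lemma one_le_qint (hq : 0 ≤ q) {n : ℕ} (hn : 1 ≤ n) : 1 ≤ qint q n := by
  simpa [qint] using qint_mono hq hn

lemma qint_pos (hq : 0 ≤ q) {n : ℕ} (hn : 1 ≤ n) : 0 < qint q n :=
  one_pos.trans_le (one_le_qint hq hn)

lemma qint_succ_mul_qint_succ_sub_qint_mul_qint (q : ℝ) (j n : ℕ) :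
    qint q (j + 1) * qint q (n + 1) - qint q j * qint q n =
      q ^ j * qint q n + qint q j * q ^ n + q ^ (j + n) := by
  rw [qint_succ, qint_succ, pow_add]
  ring

lemma qint_succ_mul_qint_succ_sub_qint_mul_qint_le (hq0 : 0 ≤ q) (hq1 : q ≤ 1) {j n : ℕ}
    (hj : j ≤ n) (hn : 1 ≤ n) :
    qint q (j + 1) * qint q (n + 1) - qint q j * qint q n ≤ 3 * qint q n := by
  have hpow : ∀ k : ℕ, q ^ k ≤ 1 := fun k => pow_le_one₀ hq0 hq1
  have hN : 0 ≤ qint q n := qint_nonneg hq0 n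
  have hJ : qint q j ≤ qint q n := qint_mono hq0 hj
  rw [qint_succ_mul_qint_succ_sub_qint_mul_qint]
  calc q ^ j * qint q n + qint q j * q ^ n + q ^ (j + n)
      ≤ 1 * qint q n + qint q n * 1 + 1 := by gcongr <;> apply hpow
    _ ≤ 3 * qint q n := by linarith [one_le_qint hq0 hn]

end

theorem stmt_12 (q : ℝ) (hq0 : 0 < q) (hq1 : q < 1) (n : ℕ) (hn : 1 ≤ n)
    (j : ℕ) (hj : j ≤ n - 1) :
    qint q (j + 1) / qint q n - qint q j / qint q (n + 1) =
      (qint q (j + 1) * qint q (n + 1) - qint q j * qint q n) /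
        (qint q n * qint q (n + 1)) ∧
    (qint q (j + 1) * qint q (n + 1) - qint q j * qint q n) /
        (qint q n * qint q (n + 1)) ≤ 3 / qint q (n + 1) := by
  have hN : 0 < qint q n := qint_pos hq0.le hn
  have hN1 : 0 < qint q (n + 1) := qint_pos hq0.le (Nat.le_add_left 1 n)
  refine ⟨by rw [div_sub_div _ _ hN.ne' hN1.ne', mul_comm (qint q n)], ?_⟩
  calc (qint q (j + 1) * qint q (n + 1) - qint q j * qint q n) / (qint q n * qint q (n + 1))
      ≤ 3 * qint q n / (qint q n * qint q (n + 1)) := by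
        gcongr
        exact qint_succ_mul_qint_succ_sub_qint_mul_qint_le hq0.le hq1.le (by omega) hn
    _ = 3 / qint q (n + 1) := by rw [mul_comm 3, mul_div_mul_left _ _ hN.ne']
end
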